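/- arXiv:2306.07741 — 3 statements merged into one kernel-verified Lean document; each statement's English description precedes it below -/
import Mathlib

section
/- Let S, A be metric spaces with Borel σ-algebras, S×A carrying the metric d_S + d_A, Ω a metric space, γ ∈ [0,1), μ a Borel probability measure on S, and π an L_π-Lipschitz-continuous policy. Fix ω, ω̂ ∈ Ω with transition kernels P_ω, P_ω̂, and let δ_ω, δ_ω̂ be Borel probability measures on S satisfying, for every bounded measurable f : S → ℝ: ∫_S f dδ_ω = (1−γ)∫_S f dμ + γ ∫_S ∫_A ∫_S f(s) dP_ω(ds|s',a) dπ(a|s') dδ_ω(s'), and the analogous equation for (δ_ω̂, P_ω̂). Assume: (i) P_ω is L_P(ω)-Lipschitz-continuous in (s,a), i.e. for every bounded 1-Lipschitz f : S → ℝ, |∫ f dP_ω(·|s,a) − ∫ f dP_ω(·|s̄,ā)| ≤ L_P(ω)·d_{S×A}((s,a),(s̄,ā)); (ii) for every bounded 1-Lipschitz f : S → ℝ and every (s,a), |∫ f dP_ω(·|s,a) − ∫ f dP_ω̂(·|s,a)| ≤ L_{ωP}·d_Ω(ω,ω̂); (iii) γ·L_P(ω)·(1+L_π) < 1; (iv)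 K := sup{ |∫ f dδ_ω − ∫ f dδ_ω̂| : f : S → ℝ bounded and 1-Lipschitz } is finite. Then K ≤ (γ·L_{ωP}/(1 − γ·L_P(ω)·(1+L_π))) · d_Ω(ω,ω̂). -/
/-!
For a bounded 1-Lipschitz `f`, the fixed-point equations cancel the initial distribution:
`∫ f ∂δ - ∫ f ∂δ' = γ (∫ P^π f ∂δ - ∫ P'^π f ∂δ')`. The function `P^π f` is
`L_P (1 + L_π)`-Lipschitz, so its discrepancy between `δ` and `δ'` is at most `L_P (1 + L_π) K`,
and it is uniformly `L_{ωP} d(ω, ω̂)`-close to `P'^π f`. Hence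
`K ≤ γ (L_P (1 + L_π) K + L_{ωP} d(ω, ω̂))`, which rearranges to the bound because `K` is finite
and `γ L_P (1 + L_π) < 1`.
-/

open MeasureTheory ProbabilityTheory Filter Topology

section Bounds

variable {X : Type*} [MeasurableSpace X] {ν : Measure X} {f g : X → ℝ} {C : ℝ}

lemma measurable_of_abs_sub_le_mul_dist [MetricSpace X] [OpensMeasurableSpace X] {c : ℝ}
    (hf : ∀ x y, |f x - f y| ≤ c * dist x y) : Measurable f :=
  (LipschitzWith.of_dist_le' hf).continuous.measurable

lemma integrable_of_abs_le [IsFiniteMeasure ν] (hf : Measurable f) (hC : ∀ x, |f x| ≤ C) :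
    Integrable f ν :=
  .of_bound hf.aestronglyMeasurable C (ae_of_all _ hC)

lemma abs_integral_le_of_abs_le [IsProbabilityMeasure ν] (hC : ∀ x, |f x| ≤ C) :
    |∫ x, f x ∂ν| ≤ C := by
  simpa using norm_integral_le_of_norm_le_const (μ := ν) (f := f) (ae_of_all _ hC)

lemma abs_integral_sub_integral_le [IsProbabilityMeasure ν] {B : ℝ} (hf : Integrable f ν)
    (hg : Integrable g ν) (hfg : ∀ x, |f x - g x| ≤ B) :
    |(∫ x, f x ∂ν) - ∫ x, g x ∂ν| ≤ B := by
  rw [← integral_sub hf hg]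
  exact abs_integral_le_of_abs_le hfg

end Bounds

section Kantorovich

variable {X : Type*} [MetricSpace X] [MeasurableSpace X]

def KantorovichDistLE (ν₁ ν₂ : Measure X) (M : ℝ) : Prop :=
  ∀ f : X → ℝ, (∃ C, ∀ x, |f x| ≤ C) → (∀ x y, |f x - f y| ≤ dist x y) →
    |(∫ x, f x ∂ν₁) - ∫ x, f x ∂ν₂| ≤ M

namespace KantorovichDistLE

variable {ν₁ ν₂ : Measure X} {M : ℝ}

lemma nonneg (h : KantorovichDistLE ν₁ ν₂ M) : 0 ≤ M := by
  simpa using h (fun _ => 0) ⟨0, by simp⟩ (fun _ _ => by simp)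

lemma abs_integral_sub_le_mul (h : KantorovichDistLE ν₁ ν₂ M) {g : X → ℝ} {c C : ℝ}
    (hc : 0 ≤ c) (hC : ∀ x, |g x| ≤ C) (hg : ∀ x y, |g x - g y| ≤ c * dist x y) :
    |(∫ x, g x ∂ν₁) - ∫ x, g x ∂ν₂| ≤ c * M := by
  -- `g / r` is a 1-Lipschitz test function for every `r > c`; let `r` decrease to `c`.
  have hscaled : ∀ r ∈ Set.Ioi c, |(∫ x, g x ∂ν₁) - ∫ x, g x ∂ν₂| ≤ r * M := by
    intro r hr
    have hr0 : 0 < r := hc.trans_lt hr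
    have hbdd : ∀ x, |g x / r| ≤ C / r := fun x => by
      rw [abs_div, abs_of_pos hr0]
      exact div_le_div_of_nonneg_right (hC x) hr0.le
    have hlip : ∀ x y, |g x / r - g y / r| ≤ dist x y := fun x y => by
      rw [div_sub_div_same, abs_div, abs_of_pos hr0, div_le_iff₀ hr0, mul_comm]
      exact (hg x y).trans (mul_le_mul_of_nonneg_right (le_of_lt hr) dist_nonneg)
    have := h (fun x => g x / r) ⟨C / r, hbdd⟩ hlip
    rwa [integral_div, integral_div, div_sub_div_same, abs_div, abs_of_pos hr0,
      div_le_iff₀ hr0, mul_comm] at this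
  exact ge_of_tendsto (((continuous_mul_const M).tendsto c).mono_left nhdsWithin_le_nhds)
    (eventually_nhdsWithin_of_forall hscaled)

lemma of_subsingleton [Subsingleton X] [IsProbabilityMeasure ν₁] [IsProbabilityMeasure ν₂] :
    KantorovichDistLE ν₁ ν₂ 0 := by
  intro f _ _
  obtain ⟨x⟩ := nonempty_of_isProbabilityMeasure ν₁
  have hf : f = fun _ => f x := funext fun y => congrArg f (Subsingleton.elim y x)
  rw [hf]
  simp

end KantorovichDistLE

end Kantorovich

section Occupancy

variable {S A : Type*} [MeasurableSpace S] [MeasurableSpace A]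

/-- `(P^π f)(s)`: the expectation of `f` after one transition from `s`, with `a ∼ π s`. -/
noncomputable def stepIntegral (π : S → Measure A) (P : S → A → Measure S) (f : S → ℝ) (s : S) :
    ℝ :=
  ∫ a, ∫ x, f x ∂(P s a) ∂(π s)

def IsOccupancyMeasure (γ : ℝ) (μ : Measure S) (π : S → Measure A) (P : S → A → Measure S)
    (δ : Measure S) : Prop :=
  ∀ f : S → ℝ, Measurable f → (∃ C, ∀ x, |f x| ≤ C) →
    ∫ s, f s ∂δ = (1 - γ) * ∫ s, f s ∂μ + γ * ∫ s, stepIntegral π P f s ∂δ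

variable {π : S → Measure A} {P P' : S → A → Measure S} {f : S → ℝ} {C : ℝ}

lemma abs_stepIntegral_le [∀ s, IsProbabilityMeasure (π s)]
    [∀ s a, IsProbabilityMeasure (P s a)] (hC : ∀ x, |f x| ≤ C) (s : S) :
    |stepIntegral π P f s| ≤ C :=
  abs_integral_le_of_abs_le fun _ => abs_integral_le_of_abs_le hC

lemma measurable_integral_kernel (hP : Measurable fun p : S × A => P p.1 p.2)
    (hf : Measurable f) : Measurable fun p : S × A => ∫ x, f x ∂(P p.1 p.2) :=
  (hf.stronglyMeasurable.integral_kernel (κ := ⟨_, hP⟩)).measurable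

lemma measurable_stepIntegral [∀ s, IsProbabilityMeasure (π s)] (hπ : Measurable π)
    (hP : Measurable fun p : S × A => P p.1 p.2) (hf : Measurable f) :
    Measurable (stepIntegral π P f) := by
  let κπ : Kernel S A := ⟨π, hπ⟩
  have : IsMarkovKernel κπ := ⟨‹_›⟩
  exact ((measurable_integral_kernel hP hf).stronglyMeasurable.integral_kernel_prod_right'
    (κ := κπ)).measurable

lemma abs_stepIntegral_sub_stepIntegral_le [MetricSpace S] [BorelSpace S]
    [∀ s, IsProbabilityMeasure (π s)] [∀ s a, IsProbabilityMeasure (P s a)]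
    [∀ s a, IsProbabilityMeasure (P' s a)] (hP : Measurable fun p : S × A => P p.1 p.2)
    (hP' : Measurable fun p : S × A => P' p.1 p.2) {ε : ℝ}
    (hPP' : ∀ s a, KantorovichDistLE (P s a) (P' s a) ε)
    (hC : ∀ x, |f x| ≤ C) (hf : ∀ x y, |f x - f y| ≤ dist x y) (s : S) :
    |stepIntegral π P f s - stepIntegral π P' f s| ≤ ε := by
  have hf_meas : Measurable f := measurable_of_abs_sub_le_mul_dist (c := 1) (by simpa using hf)
  exact abs_integral_sub_integral_le
    (integrable_of_abs_le ((measurable_integral_kernel hP hf_meas).comp measurable_prodMk_left)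
      fun _ => abs_integral_le_of_abs_le hC)
    (integrable_of_abs_le ((measurable_integral_kernel hP' hf_meas).comp measurable_prodMk_left)
      fun _ => abs_integral_le_of_abs_le hC)
    fun a => hPP' s a f ⟨C, hC⟩ hf

lemma abs_stepIntegral_sub_le_mul_dist [MetricSpace S] [MetricSpace A] [BorelSpace A]
    [∀ s, IsProbabilityMeasure (π s)] [∀ s a, IsProbabilityMeasure (P s a)] {Lπ LP : ℝ}
    (hLP : 0 ≤ LP)
    (hπL : ∀ s s', KantorovichDistLE (π s) (π s') (Lπ * dist s s'))
    (hPL : ∀ s a s' a', KantorovichDistLE (P s a) (P s' a') (LP * (dist s s' + dist a a')))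
    (hC : ∀ x, |f x| ≤ C) (hf : ∀ x y, |f x - f y| ≤ dist x y) (s t : S) :
    |stepIntegral π P f s - stepIntegral π P f t| ≤ LP * (1 + Lπ) * dist s t := by
  set h : S → A → ℝ := fun s a => ∫ x, f x ∂(P s a)
  have hh_bdd : ∀ s a, |h s a| ≤ C := fun _ _ => abs_integral_le_of_abs_le hC
  have hh_lip : ∀ s a a', |h s a - h s a'| ≤ LP * dist a a' := fun s a a' => by
    simpa using hPL s a s a' f ⟨C, hC⟩ hf
  have hh_int : ∀ s s', Integrable (h s) (π s') := fun s _ =>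
    integrable_of_abs_le (measurable_of_abs_sub_le_mul_dist (hh_lip s)) (hh_bdd s)
  calc |stepIntegral π P f s - stepIntegral π P f t|
      ≤ |(∫ a, h s a ∂(π s)) - ∫ a, h t a ∂(π s)| +
          |(∫ a, h t a ∂(π s)) - ∫ a, h t a ∂(π t)| := abs_sub_le _ _ _
    _ ≤ LP * dist s t + LP * (Lπ * dist s t) := by
      gcongr
      · exact abs_integral_sub_integral_le (hh_int s s) (hh_int t s) fun a => by
          simpa using hPL s a t a f ⟨C, hC⟩ hf
      · exact (hπL s t).abs_integral_sub_le_mul hLP (hh_bdd t) (hh_lip t)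
    _ = LP * (1 + Lπ) * dist s t := by ring

theorem IsOccupancyMeasure.kantorovichDistLE_of_kantorovichDistLE [MetricSpace S] [BorelSpace S]
    [MetricSpace A] [BorelSpace A] [∀ s, IsProbabilityMeasure (π s)]
    [∀ s a, IsProbabilityMeasure (P s a)] [∀ s a, IsProbabilityMeasure (P' s a)]
    {γ : ℝ} (hγ : 0 ≤ γ) {μ δ δ' : Measure S} [IsProbabilityMeasure δ']
    (hδ : IsOccupancyMeasure γ μ π P δ) (hδ' : IsOccupancyMeasure γ μ π P' δ')
    (hπ : Measurable π) (hP : Measurable fun p : S × A => P p.1 p.2)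
    (hP' : Measurable fun p : S × A => P' p.1 p.2) {Lπ LP ε M : ℝ} (hLπ : 0 ≤ Lπ) (hLP : 0 ≤ LP)
    (hπL : ∀ s s', KantorovichDistLE (π s) (π s') (Lπ * dist s s'))
    (hPL : ∀ s a s' a', KantorovichDistLE (P s a) (P s' a') (LP * (dist s s' + dist a a')))
    (hPP' : ∀ s a, KantorovichDistLE (P s a) (P' s a) ε) (hM : KantorovichDistLE δ δ' M) :
    KantorovichDistLE δ δ' (γ * (LP * (1 + Lπ) * M + ε)) := by
  rintro f ⟨C, hC⟩ hf
  have hf_meas : Measurable f := measurable_of_abs_sub_le_mul_dist (c := 1) (by simpa using hf)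
  set g := stepIntegral π P f
  set g' := stepIntegral π P' f
  have hdiff : (∫ s, f s ∂δ) - ∫ s, f s ∂δ' = γ * ((∫ s, g s ∂δ) - ∫ s, g' s ∂δ') := by
    rw [hδ f hf_meas ⟨C, hC⟩, hδ' f hf_meas ⟨C, hC⟩]
    ring
  have hg_int : Integrable g δ' :=
    integrable_of_abs_le (measurable_stepIntegral hπ hP hf_meas) (abs_stepIntegral_le hC)
  have hg'_int : Integrable g' δ' :=
    integrable_of_abs_le (measurable_stepIntegral hπ hP' hf_meas) (abs_stepIntegral_le hC)
  rw [hdiff, abs_mul, abs_of_nonneg hγ]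
  gcongr
  calc |(∫ s, g s ∂δ) - ∫ s, g' s ∂δ'|
      ≤ |(∫ s, g s ∂δ) - ∫ s, g s ∂δ'| + |(∫ s, g s ∂δ') - ∫ s, g' s ∂δ'| := abs_sub_le _ _ _
    _ ≤ LP * (1 + Lπ) * M + ε := by
      gcongr
      · exact hM.abs_integral_sub_le_mul (by positivity) (abs_stepIntegral_le hC)
          (abs_stepIntegral_sub_le_mul_dist hLP hπL hPL hC hf)
      · exact abs_integral_sub_integral_le hg_int hg'_int
          (abs_stepIntegral_sub_stepIntegral_le hP hP' hPP' hC hf)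

end Occupancy

theorem stmt_6_general
    {S A Ω : Type*}
    [MetricSpace S] [MeasurableSpace S] [BorelSpace S]
    [MetricSpace A] [MeasurableSpace A] [BorelSpace A]
    [MetricSpace Ω]
    (γ : ℝ) (hγ0 : 0 ≤ γ)
    (ω ω' : Ω)
    -- initial-state distribution
    (μ : Measure S)
    -- L_π-Lipschitz-continuous policy
    (π : S → Measure A)
    (hπmeas : Measurable π)
    (hπprob : ∀ s, IsProbabilityMeasure (π s))
    (Lπ : ℝ)
    (hπLip : ∀ f : A → ℝ, (∃ C, ∀ x, |f x| ≤ C) →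
      (∀ x y, |f x - f y| ≤ dist x y) →
      ∀ s s', |(∫ a, f a ∂(π s)) - (∫ a, f a ∂(π s'))| ≤ Lπ * dist s s')
    -- transition kernels
    (P P' : S → A → Measure S)
    (hPmeas : Measurable (fun p : S × A => P p.1 p.2))
    (hP'meas : Measurable (fun p : S × A => P' p.1 p.2))
    (hPprob : ∀ s a, IsProbabilityMeasure (P s a))
    (hP'prob : ∀ s a, IsProbabilityMeasure (P' s a))
    -- γ-discounted state-occupancy measures: fixed-point equations
    (δ δ' : Measure S)
    (hδ : IsProbabilityMeasure δ) (hδ' : IsProbabilityMeasure δ')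
    (hδfix : ∀ f : S → ℝ, Measurable f → (∃ C, ∀ x, |f x| ≤ C) →
      (∫ s, f s ∂δ) = (1 - γ) * (∫ s, f s ∂μ) +
        γ * ∫ s', (∫ a, (∫ s, f s ∂(P s' a)) ∂(π s')) ∂δ)
    (hδ'fix : ∀ f : S → ℝ, Measurable f → (∃ C, ∀ x, |f x| ≤ C) →
      (∫ s, f s ∂δ') = (1 - γ) * (∫ s, f s ∂μ) +
        γ * ∫ s', (∫ a, (∫ s, f s ∂(P' s' a)) ∂(π s')) ∂δ')
    (LP LωP : ℝ)
    -- (i) P_ω is L_P(ω)-Lipschitz-continuous in (s,a)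
    (hPLip : ∀ f : S → ℝ, (∃ C, ∀ x, |f x| ≤ C) →
      (∀ x y, |f x - f y| ≤ dist x y) →
      ∀ s a s' a', |(∫ x, f x ∂(P s a)) - (∫ x, f x ∂(P s' a'))| ≤
        LP * (dist s s' + dist a a'))
    -- (ii) kernels are L_{ωP}-close in Kantorovich sense
    (hPclose : ∀ f : S → ℝ, (∃ C, ∀ x, |f x| ≤ C) →
      (∀ x y, |f x - f y| ≤ dist x y) →
      ∀ s a, |(∫ x, f x ∂(P s a)) - (∫ x, f x ∂(P' s a))| ≤ LωP * dist ω ω')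
    -- (iii)
    (hcontr : γ * LP * (1 + Lπ) < 1)
    -- (iv) K is the (finite) Kantorovich distance between δ and δ'
    (K : ℝ)
    (hK : IsLUB {x : ℝ | ∃ f : S → ℝ, (∃ C, ∀ y, |f y| ≤ C) ∧
      (∀ y y', |f y - f y'| ≤ dist y y') ∧
      x = |(∫ s, f s ∂δ) - (∫ s, f s ∂δ')|} K) :
    K ≤ (γ * LωP / (1 - γ * LP * (1 + Lπ))) * dist ω ω' := by
  have hπL : ∀ s s', KantorovichDistLE (π s) (π s') (Lπ * dist s s') :=
    fun s s' f hb hf => hπLip f hb hf s s'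
  have hPL : ∀ s a s' a', KantorovichDistLE (P s a) (P s' a') (LP * (dist s s' + dist a a')) :=
    fun s a s' a' f hb hf => hPLip f hb hf s a s' a'
  have hPP' : ∀ s a, KantorovichDistLE (P s a) (P' s a) (LωP * dist ω ω') :=
    fun s a f hb hf => hPclose f hb hf s a
  have hKδ : KantorovichDistLE δ δ' K := fun f hb hf => hK.1 ⟨f, hb, hf, rfl⟩
  have hK_le : ∀ M, KantorovichDistLE δ δ' M → K ≤ M := fun M hM =>
    hK.2 (by rintro _ ⟨f, hb, hf, rfl⟩; exact hM f hb hf)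
  obtain ⟨s₀⟩ := nonempty_of_isProbabilityMeasure δ
  obtain ⟨a₀⟩ := nonempty_of_isProbabilityMeasure (π s₀)
  rw [div_mul_eq_mul_div, le_div_iff₀ (by linarith)]
  -- The signs of `LP` and `Lπ` are only forced once `S` has two points; otherwise `K = 0`.
  rcases subsingleton_or_nontrivial S with hS | hS
  · obtain rfl : K = 0 := (hK_le 0 .of_subsingleton).antisymm hKδ.nonneg
    simpa [mul_assoc] using mul_nonneg hγ0 (hPP' s₀ a₀).nonneg
  · obtain ⟨s, t, hst⟩ := exists_pair_ne S
    have hLπ : 0 ≤ Lπ := (mul_nonneg_iff_of_pos_right (dist_pos.2 hst)).1 (hπL s t).nonneg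
    have hLP : 0 ≤ LP :=
      (mul_nonneg_iff_of_pos_right (dist_pos.2 hst)).1 (by simpa using (hPL s a₀ t a₀).nonneg)
    have := hK_le _ (IsOccupancyMeasure.kantorovichDistLE_of_kantorovichDistLE hγ0 hδfix hδ'fix
      hπmeas hPmeas hP'meas hLπ hLP hπL hPL hPP' hKδ)
    linarith

/-- Context-Lipschitz continuity of the γ-discounted state-occupancy measure:
if the Kantorovich distance `K` between the occupancy measures of the two
contexts is finite (formalized: `K` is a least upper bound of the set of
test-function discrepancies), then
`K ≤ (γ L_{ωP}/(1 − γ L_P(ω)(1+L_π))) d_Ω(ω,ω̂)`. -/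
theorem stmt_6
    {S A Ω : Type*}
    [MetricSpace S] [MeasurableSpace S] [BorelSpace S]
    [MetricSpace A] [MeasurableSpace A] [BorelSpace A]
    [MetricSpace Ω]
    (γ : ℝ) (hγ0 : 0 ≤ γ) (hγ1 : γ < 1)
    (ω ω' : Ω)
    -- initial-state distribution
    (μ : Measure S) (hμ : IsProbabilityMeasure μ)
    -- L_π-Lipschitz-continuous policy
    (π : S → Measure A)
    (hπmeas : Measurable π)
    (hπprob : ∀ s, IsProbabilityMeasure (π s))
    (Lπ : ℝ)
    (hπLip : ∀ f : A → ℝ, (∃ C, ∀ x, |f x| ≤ C) →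
      (∀ x y, |f x - f y| ≤ dist x y) →
      ∀ s s', |(∫ a, f a ∂(π s)) - (∫ a, f a ∂(π s'))| ≤ Lπ * dist s s')
    -- transition kernels
    (P P' : S → A → Measure S)
    (hPmeas : Measurable (fun p : S × A => P p.1 p.2))
    (hP'meas : Measurable (fun p : S × A => P' p.1 p.2))
    (hPprob : ∀ s a, IsProbabilityMeasure (P s a))
    (hP'prob : ∀ s a, IsProbabilityMeasure (P' s a))
    -- γ-discounted state-occupancy measures: fixed-point equations
    (δ δ' : Measure S)
    (hδ : IsProbabilityMeasure δ) (hδ' : IsProbabilityMeasure δ')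
    (hδfix : ∀ f : S → ℝ, Measurable f → (∃ C, ∀ x, |f x| ≤ C) →
      (∫ s, f s ∂δ) = (1 - γ) * (∫ s, f s ∂μ) +
        γ * ∫ s', (∫ a, (∫ s, f s ∂(P s' a)) ∂(π s')) ∂δ)
    (hδ'fix : ∀ f : S → ℝ, Measurable f → (∃ C, ∀ x, |f x| ≤ C) →
      (∫ s, f s ∂δ') = (1 - γ) * (∫ s, f s ∂μ) +
        γ * ∫ s', (∫ a, (∫ s, f s ∂(P' s' a)) ∂(π s')) ∂δ')
    (LP LωP : ℝ)
    -- (i) P_ω is L_P(ω)-Lipschitz-continuous in (s,a)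
    (hPLip : ∀ f : S → ℝ, (∃ C, ∀ x, |f x| ≤ C) →
      (∀ x y, |f x - f y| ≤ dist x y) →
      ∀ s a s' a', |(∫ x, f x ∂(P s a)) - (∫ x, f x ∂(P s' a'))| ≤
        LP * (dist s s' + dist a a'))
    -- (ii) kernels are L_{ωP}-close in Kantorovich sense
    (hPclose : ∀ f : S → ℝ, (∃ C, ∀ x, |f x| ≤ C) →
      (∀ x y, |f x - f y| ≤ dist x y) →
      ∀ s a, |(∫ x, f x ∂(P s a)) - (∫ x, f x ∂(P' s a))| ≤ LωP * dist ω ω')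
    -- (iii)
    (hcontr : γ * LP * (1 + Lπ) < 1)
    -- (iv) K is the (finite) Kantorovich distance between δ and δ'
    (K : ℝ)
    (hK : IsLUB {x : ℝ | ∃ f : S → ℝ, (∃ C, ∀ y, |f y| ≤ C) ∧
      (∀ y y', |f y - f y'| ≤ dist y y') ∧
      x = |(∫ s, f s ∂δ) - (∫ s, f s ∂δ')|} K) :
    K ≤ (γ * LωP / (1 - γ * LP * (1 + Lπ))) * dist ω ω' :=
  stmt_6_general γ hγ0 ω ω' μ π hπmeas hπprob Lπ hπLip P P' hPmeas hP'meas hPprob hP'prob δ δ' hδ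
    hδ' hδfix hδ'fix LP LωP hPLip hPclose hcontr K hK
end

section
/- Let S, A be metric spaces with Borel σ-algebras, S×A carrying the metric d_S + d_A, and π an L_π-Lipschitz-continuous policy. Let Q : S×A → ℝ be bounded, measurable, and L_Q-Lipschitz on S×A. Then the value function V(s) = ∫_A Q(s,a) dπ(a|s) is Lipschitz on S with constant L_Q·(1 + L_π). -/
/-!
Write `V s - V s' = ∫ (Q s - Q s') dπ(s) + (∫ Q s' dπ(s) - ∫ Q s' dπ(s'))`. The first term is
at most `L_Q d(s, s')` because `Q` is `L_Q`-Lipschitz in the state. For the second, `Q s' / L_Q` is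
a bounded 1-Lipschitz function of the action, so the policy's Lipschitz property bounds it by
`L_Q L_π d(s, s')`.
-/

open MeasureTheory

theorem abs_integral_sub_integral_le_of_abs_sub_le {A : Type*} [MeasurableSpace A]
    {μ : Measure A} [IsProbabilityMeasure μ] {f g : A → ℝ} (hf : Integrable f μ)
    (hg : Integrable g μ) {c : ℝ} (hfg : ∀ a, |f a - g a| ≤ c) :
    |(∫ a, f a ∂μ) - (∫ a, g a ∂μ)| ≤ c := by
  rw [← integral_sub hf hg]
  simpa using
    norm_integral_le_of_norm_le_const (μ := μ) (f := fun a ↦ f a - g a) (ae_of_all _ hfg)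

section

variable {S A : Type*} [MetricSpace S] [MetricSpace A] [MeasurableSpace A]

def IsLipschitzPolicy (π : S → Measure A) (L : ℝ) : Prop :=
  ∀ f : A → ℝ, (∃ C, ∀ x, |f x| ≤ C) → (∀ x y, |f x - f y| ≤ dist x y) →
    ∀ s s', |(∫ a, f a ∂(π s)) - (∫ a, f a ∂(π s'))| ≤ L * dist s s'

theorem IsLipschitzPolicy.abs_integral_sub_integral_le {π : S → Measure A} {L : ℝ}
    [∀ s, IsProbabilityMeasure (π s)] (hπ : IsLipschitzPolicy π L) {f : A → ℝ}
    (hbd : ∃ C, ∀ x, |f x| ≤ C) {K : ℝ} (hK : 0 ≤ K) (hf : ∀ x y, |f x - f y| ≤ K * dist x y)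
    (s s' : S) :
    |(∫ a, f a ∂(π s)) - (∫ a, f a ∂(π s'))| ≤ K * L * dist s s' := by
  rcases hK.eq_or_lt with rfl | hK
  · obtain ⟨a₀⟩ := nonempty_of_isProbabilityMeasure (π s)
    have hconst : ∀ x, f x = f a₀ := fun x ↦ sub_eq_zero.mp <|
      abs_nonpos_iff.mp (by simpa using hf x a₀)
    simp [integral_eq_const (ae_of_all _ hconst)]
  · obtain ⟨C, hC⟩ := hbd
    have hscaled := hπ (fun a ↦ K⁻¹ * f a)
      ⟨K⁻¹ * C, fun x ↦ by rw [abs_mul, abs_of_pos (inv_pos.mpr hK)]; gcongr; exact hC x⟩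
      (fun x y ↦ by
        rw [← mul_sub, abs_mul, abs_of_pos (inv_pos.mpr hK), inv_mul_le_iff₀ hK]
        exact hf x y) s s'
    rw [integral_const_mul, integral_const_mul, ← mul_sub, abs_mul, abs_of_pos (inv_pos.mpr hK),
      inv_mul_le_iff₀ hK] at hscaled
    linarith

end

theorem stmt_11_general
    {S A : Type*}
    [MetricSpace S] [MeasurableSpace S]
    [MetricSpace A] [MeasurableSpace A]
    -- L_π-Lipschitz-continuous policy
    (π : S → Measure A)
    (hπprob : ∀ s, IsProbabilityMeasure (π s))
    (Lπ : ℝ)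
    (hπLip : ∀ f : A → ℝ, (∃ C, ∀ x, |f x| ≤ C) →
      (∀ x y, |f x - f y| ≤ dist x y) →
      ∀ s s', |(∫ a, f a ∂(π s)) - (∫ a, f a ∂(π s'))| ≤ Lπ * dist s s')
    -- bounded measurable L_Q-Lipschitz Q-function
    (Q : S → A → ℝ)
    (hQmeas : Measurable (fun p : S × A => Q p.1 p.2))
    (CQ : ℝ) (hQbd : ∀ s a, |Q s a| ≤ CQ)
    (LQ : ℝ)
    (hQLip : ∀ s a s' a', |Q s a - Q s' a'| ≤ LQ * (dist s s' + dist a a')) :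
    ∀ s s', |(∫ a, Q s a ∂(π s)) - (∫ a, Q s' a ∂(π s'))| ≤
      LQ * (1 + Lπ) * dist s s' := by
  intro s s'
  have hint : ∀ t u, Integrable (Q t) (π u) := fun t u ↦
    Integrable.of_bound (hQmeas.comp measurable_prodMk_left).aestronglyMeasurable CQ
      (ae_of_all _ (hQbd t))
  have h_state : |(∫ a, Q s a ∂(π s)) - (∫ a, Q s' a ∂(π s))| ≤ LQ * dist s s' :=
    abs_integral_sub_integral_le_of_abs_sub_le (hint s s) (hint s' s)
      fun a ↦ by simpa using hQLip s a s' a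
  rcases lt_or_ge LQ 0 with hLQ | hLQ
  · obtain rfl : s = s' := dist_le_zero.mp <|
      nonpos_of_mul_nonneg_right ((abs_nonneg _).trans h_state) hLQ
    simp
  have h_policy : |(∫ a, Q s' a ∂(π s)) - (∫ a, Q s' a ∂(π s'))| ≤ LQ * Lπ * dist s s' :=
    IsLipschitzPolicy.abs_integral_sub_integral_le hπLip ⟨CQ, hQbd s'⟩ hLQ
      (fun x y ↦ by simpa using hQLip s' x s' y) s s'
  calc |(∫ a, Q s a ∂(π s)) - (∫ a, Q s' a ∂(π s'))|
      ≤ |(∫ a, Q s a ∂(π s)) - (∫ a, Q s' a ∂(π s))|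
        + |(∫ a, Q s' a ∂(π s)) - (∫ a, Q s' a ∂(π s'))| := abs_sub_le _ _ _
    _ ≤ LQ * dist s s' + LQ * Lπ * dist s s' := add_le_add h_state h_policy
    _ = LQ * (1 + Lπ) * dist s s' := by ring

/-- Lipschitz continuity of the value function: if `Q` is bounded, measurable
and `L_Q`-Lipschitz on S×A (metric d_S + d_A) and the policy is
`L_π`-Lipschitz-continuous, then `V(s) = ∫_A Q(s,a) dπ(a|s)` is
`L_Q (1 + L_π)`-Lipschitz on S. -/
theorem stmt_11
    {S A : Type*}
    [MetricSpace S] [MeasurableSpace S] [BorelSpace S]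
    [MetricSpace A] [MeasurableSpace A] [BorelSpace A]
    -- L_π-Lipschitz-continuous policy
    (π : S → Measure A)
    (hπmeas : Measurable π)
    (hπprob : ∀ s, IsProbabilityMeasure (π s))
    (Lπ : ℝ)
    (hπLip : ∀ f : A → ℝ, (∃ C, ∀ x, |f x| ≤ C) →
      (∀ x y, |f x - f y| ≤ dist x y) →
      ∀ s s', |(∫ a, f a ∂(π s)) - (∫ a, f a ∂(π s'))| ≤ Lπ * dist s s')
    -- bounded measurable L_Q-Lipschitz Q-function
    (Q : S → A → ℝ)
    (hQmeas : Measurable (fun p : S × A => Q p.1 p.2))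
    (CQ : ℝ) (hQbd : ∀ s a, |Q s a| ≤ CQ)
    (LQ : ℝ)
    (hQLip : ∀ s a s' a', |Q s a - Q s' a'| ≤ LQ * (dist s s' + dist a a')) :
    ∀ s s', |(∫ a, Q s a ∂(π s)) - (∫ a, Q s' a ∂(π s'))| ≤
      LQ * (1 + Lπ) * dist s s' :=
  stmt_11_general π hπprob Lπ hπLip Q hQmeas CQ hQbd LQ hQLip
end

section
/- Let S, A be metric spaces with Borel σ-algebras, S×A carrying the metric d_S + d_A, π an L_π-Lipschitz-continuous policy, and P a transition kernel such that for every bounded 1-Lipschitz f : S → ℝ, |∫ f dP(·|s,a) − ∫ f dP(·|s̄,ā)| ≤ L_P·d_{S×A}((s,a),(s̄,ā)) for all (s,a),(s̄,ā) ∈ S×A. Then for every bounded measurable 1-Lipschitz f : S → ℝ, the function h_f : S → ℝ defined by h_f(s') = ∫_A (∫_S f(s) dP(ds|s',a)) dπ(a|s') is Lipschitz on S with constant L_P·(1 + L_π). -/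
open MeasureTheory Filter Topology

/-!
Split `h_f(s') - h_f(s'')` at the mixed term `∫_A ∫_S f dP(·|s'',a) dπ(a|s')`. The first
difference integrates, against `π(·|s')`, a pointwise change of the kernel of size at most
`L_P d(s',s'')`. The second integrates the single function `a ↦ ∫_S f dP(·|s'',a)` against two
policy measures; this function is bounded and `L_P`-Lipschitz, so after dividing it by `L_P` the
Lipschitz condition on the policy bounds the difference by `L_P L_π d(s',s'')`.
-/

section IntegralBounds

variable {X : Type*} [MeasurableSpace X]

theorem abs_integral_le_of_forall_abs_le {μ : Measure X} [IsProbabilityMeasure μ]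
    {g : X → ℝ} {C : ℝ} (h : ∀ x, |g x| ≤ C) : |∫ x, g x ∂μ| ≤ C := by
  simpa using norm_integral_le_of_norm_le_const (μ := μ) (f := g) (ae_of_all _ h)

variable [PseudoMetricSpace X]

theorem integrable_of_abs_le_of_abs_sub_le [OpensMeasurableSpace X] {μ : Measure X}
    [IsFiniteMeasure μ] {g : X → ℝ} {C K : ℝ} (hC : ∀ x, |g x| ≤ C)
    (hg : ∀ x y, |g x - g y| ≤ K * dist x y) : Integrable g μ := by
  have hlip : LipschitzWith (Real.toNNReal K) g := LipschitzWith.of_dist_le_mul fun x y =>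
    (hg x y).trans (by gcongr; exact Real.le_coe_toNNReal K)
  exact Integrable.of_bound hlip.continuous.aestronglyMeasurable C (ae_of_all _ hC)

theorem abs_integral_sub_le_mul_of_lipschitz_test {μ ν : Measure X} {c : ℝ}
    (h : ∀ g : X → ℝ, (∃ C, ∀ x, |g x| ≤ C) → (∀ x y, |g x - g y| ≤ dist x y) →
      |∫ x, g x ∂μ - ∫ x, g x ∂ν| ≤ c)
    {g : X → ℝ} {K : ℝ} (hK : 0 ≤ K) (hg_bdd : ∃ C, ∀ x, |g x| ≤ C)
    (hg : ∀ x y, |g x - g y| ≤ K * dist x y) :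
    |∫ x, g x ∂μ - ∫ x, g x ∂ν| ≤ K * c := by
  obtain ⟨C, hC⟩ := hg_bdd
  -- `K` itself may vanish, so divide by `K + δ` and let `δ → 0⁺`.
  have hscaled : ∀ δ > 0, |∫ x, g x ∂μ - ∫ x, g x ∂ν| ≤ (K + δ) * c := by
    intro δ hδ
    have hKδ : 0 < K + δ := by linarith
    have hdiv := h (fun x => g x / (K + δ)) ⟨C / (K + δ), fun x => ?_⟩ fun x y => ?_
    · rwa [integral_div, integral_div, ← sub_div, abs_div, abs_of_pos hKδ, div_le_iff₀ hKδ,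
        mul_comm] at hdiv
    · rw [abs_div, abs_of_pos hKδ]
      exact div_le_div_of_nonneg_right (hC x) hKδ.le
    · rw [← sub_div, abs_div, abs_of_pos hKδ, div_le_iff₀ hKδ]
      calc |g x - g y| ≤ K * dist x y := hg x y
        _ ≤ dist x y * (K + δ) := by nlinarith [dist_nonneg (x := x) (y := y)]
  have hlim : Tendsto (fun δ => (K + δ) * c) (𝓝[>] 0) (𝓝 (K * c)) := by
    have hcont : Continuous fun δ : ℝ => (K + δ) * c := by fun_prop
    simpa using (hcont.tendsto 0).mono_left nhdsWithin_le_nhds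
  exact ge_of_tendsto hlim (eventually_nhdsWithin_of_forall hscaled)

end IntegralBounds

theorem stmt_13_general
    {S A : Type*}
    [MetricSpace S] [MeasurableSpace S]
    [MetricSpace A] [MeasurableSpace A] [BorelSpace A]
    -- L_π-Lipschitz-continuous policy
    (π : S → Measure A)
    (hπprob : ∀ s, IsProbabilityMeasure (π s))
    (Lπ : ℝ)
    (hπLip : ∀ g : A → ℝ, (∃ C, ∀ x, |g x| ≤ C) →
      (∀ x y, |g x - g y| ≤ dist x y) →
      ∀ s s', |(∫ a, g a ∂(π s)) - (∫ a, g a ∂(π s'))| ≤ Lπ * dist s s')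
    -- L_P-Lipschitz transition kernel
    (P : S → A → Measure S)
    (hPprob : ∀ s a, IsProbabilityMeasure (P s a))
    (LP : ℝ)
    (hPLip : ∀ g : S → ℝ, (∃ C, ∀ x, |g x| ≤ C) →
      (∀ x y, |g x - g y| ≤ dist x y) →
      ∀ s a s' a', |(∫ x, g x ∂(P s a)) - (∫ x, g x ∂(P s' a'))| ≤
        LP * (dist s s' + dist a a')) :
    ∀ f : S → ℝ, Measurable f → (∃ C, ∀ x, |f x| ≤ C) →
      (∀ x y, |f x - f y| ≤ dist x y) →
      ∀ s' s'', |(∫ a, (∫ s, f s ∂(P s' a)) ∂(π s')) -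
          (∫ a, (∫ s, f s ∂(P s'' a)) ∂(π s''))| ≤
        LP * (1 + Lπ) * dist s' s'' := by
  intro f _ hf_bdd hf s' s''
  rcases eq_or_ne s' s'' with rfl | hne
  · simp
  obtain ⟨C, hC⟩ := hf_bdd
  have hP := hPLip f ⟨C, hC⟩ hf
  set g : S → A → ℝ := fun t a => ∫ x, f x ∂(P t a)
  have hg_bdd : ∀ t a, |g t a| ≤ C := fun t a => abs_integral_le_of_forall_abs_le hC
  have hg_lip : ∀ t a a', |g t a - g t a'| ≤ LP * dist a a' := fun t a a' => by
    simpa using hP t a t a'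
  have hLP : 0 ≤ LP := by
    obtain ⟨a⟩ := nonempty_of_isProbabilityMeasure (π s')
    have h0 := (abs_nonneg _).trans (hP s' a s'' a)
    rw [dist_self, add_zero] at h0
    exact nonneg_of_mul_nonneg_left h0 (dist_pos.2 hne)
  have hint : ∀ t u, Integrable (g t) (π u) := fun t _ =>
    integrable_of_abs_le_of_abs_sub_le (hg_bdd t) (hg_lip t)
  have h_kernel : |∫ a, g s' a ∂π s' - ∫ a, g s'' a ∂π s'| ≤ LP * dist s' s'' := by
    rw [← integral_sub (hint _ _) (hint _ _)]
    exact abs_integral_le_of_forall_abs_le fun a => by simpa using hP s' a s'' a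
  have h_policy : |∫ a, g s'' a ∂π s' - ∫ a, g s'' a ∂π s''| ≤ LP * (Lπ * dist s' s'') :=
    abs_integral_sub_le_mul_of_lipschitz_test (fun g hb hl => hπLip g hb hl s' s'') hLP
      ⟨C, hg_bdd s''⟩ (hg_lip s'')
  calc |∫ a, g s' a ∂π s' - ∫ a, g s'' a ∂π s''|
      ≤ |∫ a, g s' a ∂π s' - ∫ a, g s'' a ∂π s'| +
        |∫ a, g s'' a ∂π s' - ∫ a, g s'' a ∂π s''| := abs_sub_le _ _ _
    _ ≤ LP * dist s' s'' + LP * (Lπ * dist s' s'') := add_le_add h_kernel h_policy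
    _ = LP * (1 + Lπ) * dist s' s'' := by ring

/-- For an `L_P`-Lipschitz transition kernel and an `L_π`-Lipschitz-continuous
policy, the function `h_f(s') = ∫_A ∫_S f(s) dP(ds|s',a) dπ(a|s')` is
`L_P (1 + L_π)`-Lipschitz on S, for every bounded measurable 1-Lipschitz
`f : S → ℝ`. -/
theorem stmt_13
    {S A : Type*}
    [MetricSpace S] [MeasurableSpace S] [BorelSpace S]
    [MetricSpace A] [MeasurableSpace A] [BorelSpace A]
    -- L_π-Lipschitz-continuous policy
    (π : S → Measure A)
    (hπmeas : Measurable π)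
    (hπprob : ∀ s, IsProbabilityMeasure (π s))
    (Lπ : ℝ)
    (hπLip : ∀ g : A → ℝ, (∃ C, ∀ x, |g x| ≤ C) →
      (∀ x y, |g x - g y| ≤ dist x y) →
      ∀ s s', |(∫ a, g a ∂(π s)) - (∫ a, g a ∂(π s'))| ≤ Lπ * dist s s')
    -- L_P-Lipschitz transition kernel
    (P : S → A → Measure S)
    (hPmeas : Measurable (fun p : S × A => P p.1 p.2))
    (hPprob : ∀ s a, IsProbabilityMeasure (P s a))
    (LP : ℝ)
    (hPLip : ∀ g : S → ℝ, (∃ C, ∀ x, |g x| ≤ C) →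
      (∀ x y, |g x - g y| ≤ dist x y) →
      ∀ s a s' a', |(∫ x, g x ∂(P s a)) - (∫ x, g x ∂(P s' a'))| ≤
        LP * (dist s s' + dist a a')) :
    ∀ f : S → ℝ, Measurable f → (∃ C, ∀ x, |f x| ≤ C) →
      (∀ x y, |f x - f y| ≤ dist x y) →
      ∀ s' s'', |(∫ a, (∫ s, f s ∂(P s' a)) ∂(π s')) -
          (∫ a, (∫ s, f s ∂(P s'' a)) ∂(π s''))| ≤
        LP * (1 + Lπ) * dist s' s'' :=
  stmt_13_general π hπprob Lπ hπLip P hPprob LP hPLip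
end
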